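/- Let p be an odd prime, let G and H be generalized cospectral simple graphs on n vertices with adjacency matrices A and B, let J be the all-ones matrix, and for an integer t set A_t = A + tJ, B_t = B + tJ, W_t(G) = [e, A_t e, ..., A_t^{n−1} e], W_t(H) = [e, B_t e, ..., B_t^{n−1} e], and φ(x,t) = det(xI − A_t). Suppose rank_p W(G) = rank_p W(H) = n−1 and there is an integer t_0 such that φ(x, t_0) ≡ 0 (mod p) does not have two distinct roots in F_p. Then the linear systems W_{t_0}(G)x ≡ 0 (mod p) and W_{t_0}(H)x ≡ 0 (mod p) have the same set of solutions over F_p. -/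

import Mathlib

open Matrix Polynomial
open scoped Classical

noncomputable section

/-- The adjacency matrix of a simple graph on `Fin n`, with integer entries. -/
def adjMat (n : ℕ) (G : SimpleGraph (Fin n)) : Matrix (Fin n) (Fin n) ℤ :=
  Matrix.of fun i j => if G.Adj i j then 1 else 0

/-- The walk matrix `W = [e, Ae, ..., A^{n-1}e]` of a matrix `A`. -/
def walkMat {n : ℕ} (A : Matrix (Fin n) (Fin n) ℤ) : Matrix (Fin n) (Fin n) ℤ :=
  Matrix.of fun i j => ((A ^ (j : ℕ)) *ᵥ fun _ => (1 : ℤ)) i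

/-- Two graphs are generalized cospectral if they are cospectral and so are their complements. -/
def genCospectral {n : ℕ} (G H : SimpleGraph (Fin n)) : Prop :=
  (adjMat n G).charpoly = (adjMat n H).charpoly ∧
  (adjMat n Gᶜ).charpoly = (adjMat n Hᶜ).charpoly

/-- The all-ones matrix `J`. -/
def allOnes (n : ℕ) : Matrix (Fin n) (Fin n) ℤ :=
  Matrix.of fun _ _ => 1

/-!
Over `ℤ`, the matrix determinant lemma gives `det(xI - A - tJ) = φ_A(x) - t·eᵀ adj(xI - A) e`,
and `Ā = -(A - J) - I` shows that `φ_Ā(x) = (-1)ⁿ φ_{A-J}(-1-x)`. Hence generalized cospectral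
graphs have `det(xI - A_t) = det(xI - B_t)` for every `t`.

Modulo `p`, `W_t(G) x = 0` says that `q_x = Σ xⱼ Xʲ` satisfies `q_x(A_t) e = 0`, i.e. lies in the
order ideal of `e` under `A_t`. A generator of it has degree `dim span {A_tᵏ e}`, and this Krylov
space does not change when `J`, whose image is spanned by `e`, is added; so the degree is
`rank_p W(G) = n - 1`. The generators for `G` and `H` both divide the common characteristic
polynomial with a linear cofactor whose root is a root of `φ(x, t₀)`. That root being unique, the
two cofactors agree, hence so do the two order ideals.
-/

theorem Matrix.det_add_vecMulVec_of_isUnit {m R : Type*} [Fintype m] [DecidableEq m] [CommRing R]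
    {A : Matrix m m R} (hA : IsUnit A.det) (u v : m → R) :
    (A + vecMulVec u v).det = A.det + v ⬝ᵥ A.adjugate *ᵥ u := by
  rw [vecMulVec_eq Unit, det_add_replicateCol_mul_replicateRow hA, det_unique (n := Unit),
    add_apply, one_apply_eq, Matrix.mul_assoc, ← replicateCol_mulVec,
    replicateRow_mul_replicateCol_apply, inv_def,
    smul_mulVec, dotProduct_smul, smul_eq_mul, mul_add, mul_one, ← mul_assoc,
    Ring.mul_inverse_cancel _ hA, one_mul]

theorem Matrix.det_add_vecMulVec {m R : Type*} [Fintype m] [DecidableEq m] [CommRing R]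
    [IsDomain R] {A : Matrix m m R} (hA : A.det ≠ 0) (u v : m → R) :
    (A + vecMulVec u v).det = A.det + v ⬝ᵥ A.adjugate *ᵥ u := by
  set f := algebraMap R (FractionRing R)
  have hf : Function.Injective f := IsFractionRing.injective R (FractionRing R)
  have hA' : IsUnit (f.mapMatrix A).det := by
    rw [← RingHom.map_det]
    exact ((map_ne_zero_iff f hf).2 hA).isUnit
  apply hf
  have hmap : f.mapMatrix (A + vecMulVec u v) = f.mapMatrix A + vecMulVec (f ∘ u) (f ∘ v) := by
    ext i j; simp [vecMulVec]
  rw [RingHom.map_det, hmap, det_add_vecMulVec_of_isUnit hA', map_add, RingHom.map_det,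
    ← RingHom.map_adjugate]
  congr 1
  simp [dotProduct, mulVec, map_sum]

section CharpolyShift

variable {m R : Type*} [Fintype m] [DecidableEq m] [CommRing R]

def onesAdjugateForm (A : Matrix m m R) : R[X] :=
  (fun _ => 1) ⬝ᵥ (charmatrix A).adjugate *ᵥ fun _ => 1

theorem charmatrix_add_smul_ones (A : Matrix m m R) (t : R) :
    charmatrix (A + t • of fun _ _ => 1) =
      charmatrix A + vecMulVec (fun _ => -C t) (fun _ => 1) := by
  ext i j : 1
  simp only [charmatrix_apply, Matrix.add_apply, Matrix.smul_apply, of_apply, smul_eq_mul,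
    mul_one, map_add, vecMulVec_apply]
  ring

theorem charpoly_add_smul_ones [IsDomain R] (A : Matrix m m R) (t : R) :
    (A + t • of fun _ _ => 1).charpoly = A.charpoly - C t * onesAdjugateForm A := by
  have hvec : (fun _ => -C t : m → R[X]) = (-C t) • fun _ => 1 := by
    funext; simp
  rw [charpoly, charmatrix_add_smul_ones, det_add_vecMulVec A.charpoly_monic.ne_zero, hvec,
    mulVec_smul, dotProduct_smul, smul_eq_mul, charpoly, onesAdjugateForm]
  ring

theorem comp_neg_X_sub_one_comp_neg_X_sub_one (p : R[X]) :
    (p.comp (-X - 1)).comp (-X - 1) = p := by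
  rw [comp_assoc]
  simp

theorem comp_neg_X_sub_one_injective : Function.Injective fun p : R[X] => p.comp (-X - 1) :=
  Function.LeftInverse.injective comp_neg_X_sub_one_comp_neg_X_sub_one

theorem charpoly_neg_sub_one (M : Matrix m m R) :
    (-M - 1).charpoly = (-1) ^ Fintype.card m * M.charpoly.comp (-X - 1) := by
  have hmat : charmatrix (-M - 1) = -(compRingHom (-X - 1)).mapMatrix (charmatrix M) := by
    ext i j : 1
    by_cases hij : i = j
    · subst hij
      simp only [charmatrix_apply_eq, Matrix.sub_apply, Matrix.neg_apply, one_apply_eq, map_sub,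
        map_neg, map_one, RingHom.mapMatrix_apply, coe_compRingHom, map_apply, sub_comp, X_comp,
        C_comp, neg_sub]
      ring
    · simp [hij]
  rw [charpoly, hmat, det_neg, ← RingHom.map_det]
  rfl

end CharpolyShift

section Graphs

variable {n : ℕ}

theorem adjMat_compl (G : SimpleGraph (Fin n)) :
    adjMat n Gᶜ = -(adjMat n G + (-1 : ℤ) • allOnes n) - 1 := by
  ext i j
  by_cases hij : i = j
  · subst hij
    simp [adjMat, allOnes]
  · by_cases hG : G.Adj i j <;> simp [adjMat, allOnes, hij, hG, one_apply_ne hij]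

theorem charpoly_adjMat_compl (G : SimpleGraph (Fin n)) :
    (adjMat n Gᶜ).charpoly =
      (-1) ^ n * ((adjMat n G).charpoly + onesAdjugateForm (adjMat n G)).comp (-X - 1) := by
  rw [adjMat_compl, charpoly_neg_sub_one, Fintype.card_fin, allOnes,
    charpoly_add_smul_ones, map_neg, C_1, neg_one_mul, sub_neg_eq_add]

theorem onesAdjugateForm_eq_of_genCospectral {G H : SimpleGraph (Fin n)}
    (h : genCospectral G H) : onesAdjugateForm (adjMat n G) = onesAdjugateForm (adjMat n H) := by
  have hcompl := h.2
  rw [charpoly_adjMat_compl, charpoly_adjMat_compl, h.1] at hcompl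
  exact add_left_cancel
    (comp_neg_X_sub_one_injective (mul_left_cancel₀ (pow_ne_zero _ (by norm_num)) hcompl))

theorem charpoly_add_smul_allOnes_eq_of_genCospectral {G H : SimpleGraph (Fin n)}
    (h : genCospectral G H) (t : ℤ) :
    (adjMat n G + t • allOnes n).charpoly = (adjMat n H + t • allOnes n).charpoly := by
  rw [allOnes, charpoly_add_smul_ones, charpoly_add_smul_ones, h.1,
    onesAdjugateForm_eq_of_genCospectral h]

end Graphs

section Krylov

variable {m R : Type*} [Fintype m] [DecidableEq m] [CommRing R] (M : Matrix m m R) (v : m → R)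

def aevalVec : R[X] →ₗ[R] m → R where
  toFun q := aeval M q *ᵥ v
  map_add' q r := by rw [map_add, add_mulVec]
  map_smul' c q := by rw [map_smul, smul_mulVec, RingHom.id_apply]

theorem aevalVec_mul (c q : R[X]) : aevalVec M v (c * q) = aeval M c *ᵥ aevalVec M v q := by
  simp only [aevalVec, LinearMap.coe_mk, AddHom.coe_mk, map_mul, mulVec_mulVec]

def orderIdeal : Ideal R[X] where
  carrier := {q | aevalVec M v q = 0}
  zero_mem' := map_zero _
  add_mem' {q r} (hq : aevalVec M v q = 0) (hr : aevalVec M v r = 0) := by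
    simp [map_add, hq, hr]
  smul_mem' c q (hq : aevalVec M v q = 0) := by
    simp [smul_eq_mul, aevalVec_mul, hq]

def krylov : Submodule R (m → R) :=
  Submodule.span R (Set.range fun k : ℕ => (M ^ k) *ᵥ v)

variable {M v}

theorem mem_orderIdeal {q : R[X]} : q ∈ orderIdeal M v ↔ aevalVec M v q = 0 := Iff.rfl

variable (M v)

theorem aevalVec_monomial (k : ℕ) (c : R) : aevalVec M v (monomial k c) = c • ((M ^ k) *ᵥ v) := by
  rw [aevalVec, LinearMap.coe_mk, AddHom.coe_mk, ← C_mul_X_pow_eq_monomial, map_mul, aeval_C,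
    map_pow, aeval_X, Algebra.algebraMap_eq_smul_one, smul_mul_assoc, one_mul, smul_mulVec]

theorem charpoly_mem_orderIdeal : M.charpoly ∈ orderIdeal M v := by
  simp [mem_orderIdeal, aevalVec, aeval_self_charpoly]

theorem aevalVec_modByMonic_charpoly (q : R[X]) :
    aevalVec M v (q %ₘ M.charpoly) = aevalVec M v q := by
  simp [aevalVec, aeval_modByMonic_eq_self_of_root (aeval_self_charpoly M)]

theorem range_aevalVec : LinearMap.range (aevalVec M v) = krylov M v := by
  refine le_antisymm ?_ (Submodule.span_le.2 ?_)
  · rintro _ ⟨q, rfl⟩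
    induction q using Polynomial.induction_on' with
    | add p q hp hq => rw [map_add]; exact add_mem hp hq
    | monomial k c =>
      rw [aevalVec_monomial]
      exact Submodule.smul_mem _ c (Submodule.subset_span ⟨k, rfl⟩)
  · rintro _ ⟨k, rfl⟩
    exact ⟨monomial k 1, by rw [aevalVec_monomial, one_smul]⟩

theorem self_mem_krylov : v ∈ krylov M v :=
  Submodule.subset_span ⟨0, by simp⟩

variable {M v}

theorem mulVec_mem_krylov {w : m → R} (hw : w ∈ krylov M v) : M *ᵥ w ∈ krylov M v := by
  rw [← range_aevalVec] at hw ⊢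
  obtain ⟨q, rfl⟩ := hw
  exact ⟨X * q, by rw [aevalVec_mul, aeval_X]⟩

variable (M v)

theorem krylov_add_vecMulVec_le (w : m → R) : krylov (M + vecMulVec v w) v ≤ krylov M v := by
  refine Submodule.span_le.2 ?_
  rintro _ ⟨k, rfl⟩
  induction k with
  | zero => simpa using self_mem_krylov M v
  | succ k ih =>
    change (M + vecMulVec v w) ^ (k + 1) *ᵥ v ∈ krylov M v
    rw [pow_succ', ← mulVec_mulVec, add_mulVec, vecMulVec_mulVec, op_smul_eq_smul]
    exact add_mem (mulVec_mem_krylov ih) (Submodule.smul_mem _ _ (self_mem_krylov M v))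

theorem krylov_add_vecMulVec (w : m → R) : krylov (M + vecMulVec v w) v = krylov M v := by
  refine le_antisymm (krylov_add_vecMulVec_le M v w) ?_
  simpa [add_assoc, ← Matrix.vecMulVec_add] using krylov_add_vecMulVec_le (M + vecMulVec v w) v (-w)

end Krylov

theorem finrank_krylov {m F : Type*} [Fintype m] [DecidableEq m] [Field F]
    (M : Matrix m m F) (v : m → F) :
    Module.finrank F (krylov M v) =
      (Submodule.IsPrincipal.generator (orderIdeal M v)).natDegree := by
  set g := Submodule.IsPrincipal.generator (orderIdeal M v)
  have hg : g ≠ 0 := by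
    rw [Ne, ← Submodule.IsPrincipal.eq_bot_iff_generator_eq_zero]
    exact (Submodule.ne_bot_iff _).2 ⟨_, charpoly_mem_orderIdeal M v, M.charpoly_monic.ne_zero⟩
  have hker : LinearMap.ker (aevalVec M v) = (Ideal.span {g}).restrictScalars F := by
    rw [Ideal.span_singleton_generator]
    rfl
  rw [← range_aevalVec, ← (aevalVec M v).quotKerEquivRange.finrank_eq, hker,
    (Submodule.Quotient.restrictScalarsEquiv F _).finrank_eq]
  exact (AdjoinRoot.powerBasis hg).finrank

section WalkMatrix

variable {n : ℕ} {R : Type*} [CommRing R]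

theorem walkMat_map_apply (M0 : Matrix (Fin n) (Fin n) ℤ) (i j : Fin n) :
    (walkMat M0).map (Int.cast : ℤ → R) i j = ((M0.map Int.cast) ^ (j : ℕ) *ᵥ fun _ => 1) i := by
  have h := RingHom.map_mulVec (Int.castRingHom R) (M0 ^ (j : ℕ)) (fun _ => 1) i
  rw [← RingHom.mapMatrix_apply, map_pow] at h
  simpa [walkMat, Function.comp_def] using h

theorem walkMat_map_mulVec (M0 : Matrix (Fin n) (Fin n) ℤ) (x : Fin n → R) :
    (walkMat M0).map (Int.cast : ℤ → R) *ᵥ x =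
      aevalVec (M0.map Int.cast) (fun _ => 1) (∑ j : Fin n, monomial j (x j)) := by
  ext i
  rw [map_sum, Finset.sum_apply, mulVec, dotProduct]
  simp only [walkMat_map_apply, aevalVec_monomial, Pi.smul_apply, smul_eq_mul, mul_comm]

theorem range_mulVecLin_walkMat_map [Nontrivial R] (M0 : Matrix (Fin n) (Fin n) ℤ) :
    LinearMap.range ((walkMat M0).map (Int.cast : ℤ → R)).mulVecLin =
      krylov (M0.map Int.cast) (fun _ => 1) := by
  set M := M0.map (Int.cast : ℤ → R)
  rw [← range_aevalVec]
  refine le_antisymm ?_ ?_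
  · rintro _ ⟨x, rfl⟩
    exact ⟨_, (walkMat_map_mulVec M0 x).symm⟩
  · rintro _ ⟨q, rfl⟩
    have hdeg : (q %ₘ M.charpoly).degree < n := by
      simpa using degree_modByMonic_lt q M.charpoly_monic
    refine ⟨fun j => (q %ₘ M.charpoly).coeff j, ?_⟩
    rw [mulVecLin_apply, walkMat_map_mulVec,
      sum_fin (fun i a => monomial i a) (fun _ => monomial_zero_right _) hdeg, sum_monomial_eq,
      aevalVec_modByMonic_charpoly]

theorem rank_walkMat_map [Nontrivial R] (M0 : Matrix (Fin n) (Fin n) ℤ) :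
    ((walkMat M0).map (Int.cast : ℤ → R)).rank =
      Module.finrank R (krylov (M0.map (Int.cast : ℤ → R)) (fun _ => 1)) := by
  rw [Matrix.rank, range_mulVecLin_walkMat_map]

theorem krylov_map_add_smul_allOnes (M0 : Matrix (Fin n) (Fin n) ℤ) (t : ℤ) :
    krylov ((M0 + t • allOnes n).map (Int.cast : ℤ → R)) (fun _ => 1) =
      krylov (M0.map Int.cast) (fun _ => 1) := by
  have hmap : (M0 + t • allOnes n).map (Int.cast : ℤ → R) =
      M0.map Int.cast + vecMulVec (fun _ => 1) (fun _ => (t : R)) := by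
    ext i j
    simp [allOnes, vecMulVec]
  rw [hmap, krylov_add_vecMulVec]

end WalkMatrix

section LinearCofactor

variable {F : Type*} [Field F]

theorem exists_isRoot_associated_of_natDegree_eq_one {a : F[X]} (ha : a.natDegree = 1) :
    ∃ r, a.IsRoot r ∧ Associated (X - C r) a := by
  have ha0 : a ≠ 0 := by rintro rfl; simp at ha
  obtain ⟨r, hr⟩ := exists_root_of_degree_eq_one ((degree_eq_iff_natDegree_eq ha0).2 ha)
  exact ⟨r, hr, associated_of_dvd_of_natDegree_le (dvd_iff_isRoot.2 hr) ha0 (by simp [ha])⟩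

theorem associated_of_dvd_of_natDegree_add_one {f g h : F[X]} (hf : f ≠ 0)
    (hroot : ∀ x y, f.IsRoot x → f.IsRoot y → x = y) (hg : g ∣ f) (hh : h ∣ f)
    (hgdeg : g.natDegree + 1 = f.natDegree) (hhdeg : h.natDegree + 1 = f.natDegree) :
    Associated g h := by
  have cofactor {k : F[X]} (hk : k ∣ f) (hkdeg : k.natDegree + 1 = f.natDegree) :
      ∃ r, f.IsRoot r ∧ Associated (k * (X - C r)) f := by
    obtain ⟨a, rfl⟩ := hk
    have ha : a.natDegree = 1 := by
      rw [natDegree_mul (left_ne_zero_of_mul hf) (right_ne_zero_of_mul hf)] at hkdeg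
      omega
    obtain ⟨r, hr, hassoc⟩ := exists_isRoot_associated_of_natDegree_eq_one ha
    exact ⟨r, root_mul_left_of_isRoot k hr, hassoc.mul_left k⟩
  obtain ⟨r, hr, hgr⟩ := cofactor hg hgdeg
  obtain ⟨s, hs, hhs⟩ := cofactor hh hhdeg
  obtain rfl := hroot r s hr hs
  exact (hgr.trans hhs.symm).of_mul_right (Associated.refl _) (X_sub_C_ne_zero r)

theorem orderIdeal_eq_of_charpoly_eq {n : ℕ} {M N : Matrix (Fin n) (Fin n) F} {v w : Fin n → F}
    (hχ : M.charpoly = N.charpoly)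
    (hroot : ∀ x y, M.charpoly.IsRoot x → M.charpoly.IsRoot y → x = y)
    (hM : Module.finrank F (krylov M v) = n - 1) (hN : Module.finrank F (krylov N w) = n - 1) :
    orderIdeal M v = orderIdeal N w := by
  rcases Nat.eq_zero_or_pos n with rfl | hn
  · ext q
    simp [mem_orderIdeal, eq_iff_true_of_subsingleton]
  rw [← Ideal.span_singleton_generator (orderIdeal M v),
    ← Ideal.span_singleton_generator (orderIdeal N w), Ideal.span_singleton_eq_span_singleton]
  have hdeg : M.charpoly.natDegree = n := by simp
  refine associated_of_dvd_of_natDegree_add_one M.charpoly_monic.ne_zero hroot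
    ((Submodule.IsPrincipal.mem_iff_generator_dvd _).1 (charpoly_mem_orderIdeal M v))
    (hχ ▸ (Submodule.IsPrincipal.mem_iff_generator_dvd _).1 (charpoly_mem_orderIdeal N w))
    ?_ ?_ <;> rw [← finrank_krylov] <;> omega

end LinearCofactor

theorem stmt13_general (n p : ℕ) (hp : p.Prime)
    (G H : SimpleGraph (Fin n)) (hGH : genCospectral G H)
    (hrkG : ((walkMat (adjMat n G)).map (Int.cast : ℤ → ZMod p)).rank = n - 1)
    (hrkH : ((walkMat (adjMat n H)).map (Int.cast : ℤ → ZMod p)).rank = n - 1)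
    (t₀ : ℤ)
    (hroots : ∀ x y : ZMod p,
      ((adjMat n G + t₀ • allOnes n).charpoly.map (Int.castRingHom (ZMod p))).IsRoot x →
      ((adjMat n G + t₀ • allOnes n).charpoly.map (Int.castRingHom (ZMod p))).IsRoot y →
      x = y) :
    ∀ x : Fin n → ZMod p,
      ((walkMat (adjMat n G + t₀ • allOnes n)).map (Int.cast : ℤ → ZMod p)) *ᵥ x = 0 ↔
      ((walkMat (adjMat n H + t₀ • allOnes n)).map (Int.cast : ℤ → ZMod p)) *ᵥ x = 0 := by
  have : Fact p.Prime := ⟨hp⟩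
  have hcast (M0 : Matrix (Fin n) (Fin n) ℤ) :
      (M0.map (Int.cast : ℤ → ZMod p)).charpoly = M0.charpoly.map (Int.castRingHom (ZMod p)) := by
    simpa using M0.charpoly_map (Int.castRingHom (ZMod p))
  have hχ : ((adjMat n G + t₀ • allOnes n).map (Int.cast : ℤ → ZMod p)).charpoly =
      ((adjMat n H + t₀ • allOnes n).map (Int.cast : ℤ → ZMod p)).charpoly := by
    rw [hcast, hcast, charpoly_add_smul_allOnes_eq_of_genCospectral hGH]
  have hkrylov (K : SimpleGraph (Fin n))
      (hrk : ((walkMat (adjMat n K)).map (Int.cast : ℤ → ZMod p)).rank = n - 1) :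
      Module.finrank (ZMod p)
        (krylov ((adjMat n K + t₀ • allOnes n).map (Int.cast : ℤ → ZMod p)) fun _ => 1) =
        n - 1 := by
    rw [krylov_map_add_smul_allOnes, ← rank_walkMat_map, hrk]
  have hideal :=
    orderIdeal_eq_of_charpoly_eq hχ (by rwa [hcast]) (hkrylov G hrkG) (hkrylov H hrkH)
  intro x
  rw [walkMat_map_mulVec, walkMat_map_mulVec, ← mem_orderIdeal, ← mem_orderIdeal, hideal]

/-- Corollary 3: let `p` be an odd prime, `G, H` generalized cospectral with
`rank_p W(G) = rank_p W(H) = n - 1`, and `t₀` an integer such that `φ(x,t₀) = det(xI - A - t₀J)`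
has no two distinct roots mod `p`. Then `W_{t₀}(G)x ≡ 0 (mod p)` and `W_{t₀}(H)x ≡ 0 (mod p)`
have the same solutions. -/
theorem stmt13 (n p : ℕ) (hp : p.Prime) (hpodd : Odd p)
    (G H : SimpleGraph (Fin n)) (hGH : genCospectral G H)
    (hrkG : ((walkMat (adjMat n G)).map (Int.cast : ℤ → ZMod p)).rank = n - 1)
    (hrkH : ((walkMat (adjMat n H)).map (Int.cast : ℤ → ZMod p)).rank = n - 1)
    (t₀ : ℤ)
    (hroots : ∀ x y : ZMod p,
      ((adjMat n G + t₀ • allOnes n).charpoly.map (Int.castRingHom (ZMod p))).IsRoot x →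
      ((adjMat n G + t₀ • allOnes n).charpoly.map (Int.castRingHom (ZMod p))).IsRoot y →
      x = y) :
    ∀ x : Fin n → ZMod p,
      ((walkMat (adjMat n G + t₀ • allOnes n)).map (Int.cast : ℤ → ZMod p)) *ᵥ x = 0 ↔
      ((walkMat (adjMat n H + t₀ • allOnes n)).map (Int.cast : ℤ → ZMod p)) *ᵥ x = 0 :=
  stmt13_general n p hp G H hGH hrkG hrkH t₀ hroots
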